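/- arXiv:1411.3810 — 2 statements merged into one kernel-verified Lean document; each statement's English description precedes it below -/
import Mathlib

section
/- For all integers m, n ≥ 2, the rank-two null space of the lifted linear convolution map with one dimension equal to 2 is exactly the parametrized set N0: N(S_{(m,2)}, 2) = N0(m,2) and N(S_{(2,n)}, 2) = N0(2,n). -/
open scoped BigOperators
open MeasureTheory

noncomputable section

/-- 1-based access into a vector `u ∈ ℝ^d`, with the convention that
out-of-range indices (including `0` and anything `> d`) give `0`. -/
def pad1 {d : ℕ} (u : Fin d → ℝ) (i : ℕ) : ℝ :=
  if h : 1 ≤ i ∧ i ≤ d then u ⟨i - 1, by omega⟩ else 0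

/-- The lifted linear convolution map `S_{(m,n)} : ℝ^{m×n} → ℝ^{m+n-1}`,
summing the entries of a matrix along its anti-diagonals. -/
def liftS (m n : ℕ) (W : Matrix (Fin m) (Fin n) ℝ) : Fin (m + n - 1) → ℝ :=
  fun l => ∑ k : Fin m, ∑ j : Fin n, if (k : ℕ) + (j : ℕ) = (l : ℕ) then W k j else 0

/-- Linear convolution `x ⋆ y ∈ ℝ^{m+n-1}` of `x ∈ ℝ^m` and `y ∈ ℝ^n`. -/
def conv {m n : ℕ} (x : Fin m → ℝ) (y : Fin n → ℝ) : Fin (m + n - 1) → ℝ :=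
  fun l => ∑ k : Fin m, ∑ j : Fin n, if (k : ℕ) + (j : ℕ) = (l : ℕ) then x k * y j else 0

/-- The rank-two null space `N(S_{(m,n)}, 2)`. -/
def rankTwoNull (m n : ℕ) : Set (Matrix (Fin m) (Fin n) ℝ) :=
  {Q | Q.rank ≤ 2 ∧ liftS m n Q = 0}

/-- The parametrized family `N0(m,n)`:
`Q(k,l) = u(k)·v(l−1) − u(k−1)·v(l)` (1-based, with zero-padding conventions). -/
def N0set (m n : ℕ) : Set (Matrix (Fin m) (Fin n) ℝ) :=
  {Q | ∃ (u : Fin (m - 1) → ℝ) (v : Fin (n - 1) → ℝ),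
    ∀ (k : Fin m) (l : Fin n),
      Q k l = pad1 u ((k : ℕ) + 1) * pad1 v (l : ℕ) - pad1 u (k : ℕ) * pad1 v ((l : ℕ) + 1)}

/-- The recursively defined family `N2(m,n)`:
`Q(k,l) = u₁(k)·v₁(l−1) + u₂(k−1)·v₂(l)` (1-based, with zero-padding conventions),
where `u₁v₁ᵀ + u₂v₂ᵀ ∈ N(S_{(m-1,n-1)}, 2) \ {0}`. -/
def N2set (m n : ℕ) : Set (Matrix (Fin m) (Fin n) ℝ) :=
  {Q | ∃ (u₁ u₂ : Fin (m - 1) → ℝ) (v₁ v₂ : Fin (n - 1) → ℝ),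
    (Matrix.of fun i j => u₁ i * v₁ j + u₂ i * v₂ j) ∈ rankTwoNull (m - 1) (n - 1) ∧
    (Matrix.of fun i j => u₁ i * v₁ j + u₂ i * v₂ j) ≠ (0 : Matrix (Fin (m - 1)) (Fin (n - 1)) ℝ) ∧
    ∀ (k : Fin m) (l : Fin n),
      Q k l = pad1 u₁ ((k : ℕ) + 1) * pad1 v₁ (l : ℕ) + pad1 u₂ (k : ℕ) * pad1 v₂ ((l : ℕ) + 1)}

/-- The exceptional set `M(m,n) = {Q ∈ N(S_{(m,n)}, 2) : Q(m,1) = 0 and Q(1,n) = 0}` (1-based). -/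
def Mexc (m n : ℕ) (hm : 0 < m) (hn : 0 < n) : Set (Matrix (Fin m) (Fin n) ℝ) :=
  {Q | Q ∈ rankTwoNull m n ∧ Q ⟨m - 1, by omega⟩ ⟨0, hn⟩ = 0 ∧ Q ⟨0, hm⟩ ⟨n - 1, by omega⟩ = 0}

/-- Identifiability of the pair `p = (x,y)` with respect to linear convolution
and the constraint set `K`. -/
def Identifiable {m n : ℕ} (K : Set ((Fin m → ℝ) × (Fin n → ℝ)))
    (p : (Fin m → ℝ) × (Fin n → ℝ)) : Prop :=
  ∀ q ∈ K, conv q.1 q.2 = conv p.1 p.2 →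
    ∃ α : ℝ, α ≠ 0 ∧ q.1 = α • p.1 ∧ q.2 = (1 / α) • p.2

/-- The quotient set `Q∼(w,d)`: pairs `(w*, γ) ∈ ℝ^{d-1} × [0, 2π)` with
`w(j) = w*(j)·cos γ − w*(j−1)·sin γ` for `1 ≤ j ≤ d` (1-based, zero-padding conventions). -/
def quotSet (d : ℕ) (w : Fin d → ℝ) : Set ((Fin (d - 1) → ℝ) × ℝ) :=
  {p | p.2 ∈ Set.Ico 0 (2 * Real.pi) ∧
    ∀ j : Fin d, w j = pad1 p.1 ((j : ℕ) + 1) * Real.cos p.2 - pad1 p.1 (j : ℕ) * Real.sin p.2}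

/-- Matrices over `ℝ` carry the (product) metric space structure of `ℝ^{m×n}`. -/
instance {m n : ℕ} : MetricSpace (Matrix (Fin m) (Fin n) ℝ) :=
  show MetricSpace (Fin m → Fin n → ℝ) from inferInstance

/-
Extend `Q` by zeros to `ℕ × ℕ`; then `S(Q)(l)` is the sum of `Q` over the antidiagonal
`{(k, j) | k + j = l}`. If `Q(k, j) = U(k + 1) V(j) - U(k) V(j + 1)` with `U 0 = V 0 = 0`, both
halves of that sum are the `(l + 1)`-th coefficient of the convolution `U ⋆ V`, so `S(Q) = 0`;
and `Q` factors through `ℝ²`, so it has rank at most two. Conversely, for an `m × 2` matrix the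
equations `S(Q) = 0` say `Q(1,1) = Q(m,2) = 0` and `Q(k+1,1) = -Q(k,2)`, so `Q` is recovered
from `u(k) = -Q(k+1,1)` and `v = 1`. Both sets are invariant under transposition (send `(u, v)`
to `(-v, u)`), which gives the `2 × n` case.
-/

open Finset
open scoped Matrix

lemma pad1_zero {d : ℕ} (u : Fin d → ℝ) : pad1 u 0 = 0 :=
  dif_neg fun h => by omega

lemma pad1_eq_zero_of_le {d i : ℕ} (u : Fin (d - 1) → ℝ) (h : d ≤ i) : pad1 u i = 0 :=
  dif_neg fun h' => by omega

lemma pad1_neg {d : ℕ} (u : Fin d → ℝ) (i : ℕ) : pad1 (-u) i = -pad1 u i := by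
  unfold pad1
  split_ifs <;> simp

lemma exists_pad1_eq {d : ℕ} (g : ℕ → ℝ) (h0 : g 0 = 0) (hd : ∀ i, d < i → g i = 0) :
    ∃ u : Fin d → ℝ, pad1 u = g := by
  refine ⟨fun i => g (i + 1), funext fun i => ?_⟩
  unfold pad1
  split_ifs with h
  · show g (i - 1 + 1) = g i
    rw [Nat.sub_add_cancel h.1]
  · obtain rfl | hi : i = 0 ∨ d < i := by omega
    exacts [h0.symm, (hd i hi).symm]

section ZeroExtend

variable {α : Type*} [Zero α] {m n : ℕ}

/-- Indexed from `0`, unlike `pad1`. -/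
def zeroExtend (Q : Matrix (Fin m) (Fin n) α) (k j : ℕ) : α :=
  if h : k < m ∧ j < n then Q ⟨k, h.1⟩ ⟨j, h.2⟩ else 0

@[simp]
lemma zeroExtend_coe (Q : Matrix (Fin m) (Fin n) α) (k : Fin m) (j : Fin n) :
    zeroExtend Q k j = Q k j := by
  simp [zeroExtend]

lemma zeroExtend_of_le_left (Q : Matrix (Fin m) (Fin n) α) {k : ℕ} (hk : m ≤ k) (j : ℕ) :
    zeroExtend Q k j = 0 :=
  dif_neg fun h => by omega

lemma zeroExtend_of_le_right (Q : Matrix (Fin m) (Fin n) α) (k : ℕ) {j : ℕ} (hj : n ≤ j) :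
    zeroExtend Q k j = 0 :=
  dif_neg fun h => by omega

lemma zeroExtend_transpose (Q : Matrix (Fin m) (Fin n) α) (k j : ℕ) :
    zeroExtend Qᵀ k j = zeroExtend Q j k := by
  unfold zeroExtend
  by_cases h : k < n ∧ j < m
  · rw [dif_pos h, dif_pos ⟨h.2, h.1⟩, Matrix.transpose_apply]
  · rw [dif_neg h, dif_neg fun h' => h ⟨h'.2, h'.1⟩]

end ZeroExtend

lemma liftS_apply (m n : ℕ) (Q : Matrix (Fin m) (Fin n) ℝ) (l : Fin (m + n - 1)) :
    liftS m n Q l = ∑ p ∈ antidiagonal (l : ℕ), zeroExtend Q p.1 p.2 := by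
  rw [liftS, ← Fintype.sum_prod_type']
  refine sum_bij_ne_zero (fun x _ _ => ((x.1 : ℕ), (x.2 : ℕ))) ?_ ?_ ?_ ?_
  · intro x _ hx
    simpa using (ite_ne_right_iff.mp hx).1
  · intro x _ _ y _ _ hxy
    simp only [Prod.mk.injEq] at hxy
    exact Prod.ext (Fin.ext hxy.1) (Fin.ext hxy.2)
  · intro p hp hne
    obtain ⟨h, hQ⟩ := dite_ne_right_iff.mp hne
    refine ⟨(⟨p.1, h.1⟩, ⟨p.2, h.2⟩), mem_univ _, ?_, rfl⟩
    simpa [HasAntidiagonal.mem_antidiagonal.mp hp] using hQ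
  · intro x _ hx
    rw [if_pos (ite_ne_right_iff.mp hx).1, zeroExtend_coe]

lemma liftS_eq_zero_iff {m n : ℕ} (Q : Matrix (Fin m) (Fin n) ℝ) :
    liftS m n Q = 0 ↔ ∀ l, ∑ p ∈ antidiagonal l, zeroExtend Q p.1 p.2 = 0 := by
  refine ⟨fun hS l => ?_, fun h => funext fun l => (liftS_apply m n Q l).trans (h l)⟩
  by_cases hl : l < m + n - 1
  · rw [← liftS_apply m n Q ⟨l, hl⟩, hS, Pi.zero_apply]
  · refine sum_eq_zero fun p hp => ?_
    rw [HasAntidiagonal.mem_antidiagonal] at hp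
    obtain hk | hj : m ≤ p.1 ∨ n ≤ p.2 := by omega
    exacts [zeroExtend_of_le_left Q hk _, zeroExtend_of_le_right Q _ hj]

lemma transpose_mem_rankTwoNull_iff {m n : ℕ} (Q : Matrix (Fin m) (Fin n) ℝ) :
    Qᵀ ∈ rankTwoNull n m ↔ Q ∈ rankTwoNull m n := by
  simp only [rankTwoNull, Set.mem_ofPred_eq, Matrix.rank_transpose, liftS_eq_zero_iff,
    zeroExtend_transpose]
  refine and_congr_right fun _ => forall_congr' fun l => ?_
  have hswap := Finset.Nat.sum_antidiagonal_swap (n := l) (f := fun p => zeroExtend Q p.1 p.2)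
  simp only [Prod.fst_swap, Prod.snd_swap] at hswap
  rw [hswap]

lemma transpose_mem_N0set {m n : ℕ} {Q : Matrix (Fin m) (Fin n) ℝ} (hQ : Q ∈ N0set m n) :
    Qᵀ ∈ N0set n m := by
  obtain ⟨u, v, h⟩ := hQ
  exact ⟨-v, u, fun l k => by rw [Matrix.transpose_apply, h, pad1_neg, pad1_neg]; ring⟩

lemma transpose_mem_N0set_iff {m n : ℕ} (Q : Matrix (Fin m) (Fin n) ℝ) :
    Qᵀ ∈ N0set n m ↔ Q ∈ N0set m n :=
  ⟨fun h => Q.transpose_transpose ▸ transpose_mem_N0set h, transpose_mem_N0set⟩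

lemma zeroExtend_eq_of_eq_pad1 {m n : ℕ} {Q : Matrix (Fin m) (Fin n) ℝ} {u : Fin (m - 1) → ℝ}
    {v : Fin (n - 1) → ℝ}
    (h : ∀ (k : Fin m) (l : Fin n), Q k l = pad1 u (k + 1) * pad1 v l - pad1 u k * pad1 v (l + 1))
    (k j : ℕ) : zeroExtend Q k j = pad1 u (k + 1) * pad1 v j - pad1 u k * pad1 v (j + 1) := by
  by_cases hk : k < m
  · by_cases hj : j < n
    · exact (zeroExtend_coe Q ⟨k, hk⟩ ⟨j, hj⟩).trans (h _ _)
    · rw [zeroExtend_of_le_right Q k (not_lt.mp hj), pad1_eq_zero_of_le v (by omega),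
        pad1_eq_zero_of_le v (by omega)]
      ring
  · rw [zeroExtend_of_le_left Q (not_lt.mp hk), pad1_eq_zero_of_le u (by omega),
      pad1_eq_zero_of_le u (by omega)]
    ring

/-- Both sides are the `(l + 1)`-th coefficient of the convolution of `U` and `V`. -/
lemma sum_antidiagonal_shift_left_eq_shift_right {R : Type*} [NonUnitalNonAssocSemiring R]
    (U V : ℕ → R) (hU : U 0 = 0) (hV : V 0 = 0) (l : ℕ) :
    ∑ p ∈ antidiagonal l, U (p.1 + 1) * V p.2 = ∑ p ∈ antidiagonal l, U p.1 * V (p.2 + 1) := by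
  have h₁ := Finset.Nat.sum_antidiagonal_succ (n := l) (f := fun p => U p.1 * V p.2)
  have h₂ := Finset.Nat.sum_antidiagonal_succ' (n := l) (f := fun p => U p.1 * V p.2)
  simp only [hU, hV, zero_mul, mul_zero, zero_add] at h₁ h₂
  rw [← h₁, h₂]

lemma rank_le_two_of_mem_N0set {m n : ℕ} {Q : Matrix (Fin m) (Fin n) ℝ} (hQ : Q ∈ N0set m n) :
    Q.rank ≤ 2 := by
  obtain ⟨u, v, h⟩ := hQ
  have hfac : Q = (Matrix.of fun (k : Fin m) (i : Fin 2) => ![pad1 u (k + 1), pad1 u k] i) *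
      Matrix.of fun (i : Fin 2) (j : Fin n) => ![pad1 v j, -pad1 v (j + 1)] i := by
    ext k l
    simp [Matrix.mul_apply, Fin.sum_univ_two, h]
    ring
  rw [hfac]
  exact (Matrix.rank_mul_le_left _ _).trans (Matrix.rank_le_width _)

lemma N0set_subset_rankTwoNull (m n : ℕ) : N0set m n ⊆ rankTwoNull m n := by
  intro Q hQ
  refine ⟨rank_le_two_of_mem_N0set hQ, (liftS_eq_zero_iff Q).2 fun l => ?_⟩
  obtain ⟨u, v, h⟩ := hQ
  simp_rw [zeroExtend_eq_of_eq_pad1 h, sum_sub_distrib, sub_eq_zero]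
  exact sum_antidiagonal_shift_left_eq_shift_right _ _ (pad1_zero u) (pad1_zero v) l

lemma sum_antidiagonal_succ_of_two_le {M : Type*} [AddCommMonoid M] (f : ℕ → ℕ → M)
    (hf : ∀ k j, 2 ≤ j → f k j = 0) (l : ℕ) :
    ∑ p ∈ antidiagonal (l + 1), f p.1 p.2 = f (l + 1) 0 + f l 1 := by
  rw [Finset.Nat.sum_antidiagonal_succ', sum_eq_single_of_mem (l, 0) (by simp)]
  intro p hp hne
  rw [HasAntidiagonal.mem_antidiagonal] at hp
  have hp₂ : p.2 ≠ 0 := fun h => hne (Prod.ext (by omega) h)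
  exact hf p.1 (p.2 + 1) (by omega)

lemma rankTwoNull_subset_N0set_width_two (m : ℕ) : rankTwoNull m 2 ⊆ N0set m 2 := by
  rintro Q ⟨-, hS⟩
  rw [liftS_eq_zero_iff] at hS
  have h₀ : zeroExtend Q 0 0 = 0 := by simpa using hS 0
  have hdiag : ∀ l, zeroExtend Q l 1 = -zeroExtend Q (l + 1) 0 := fun l => by
    rw [eq_neg_iff_add_eq_zero, add_comm, ← hS (l + 1)]
    exact (sum_antidiagonal_succ_of_two_le _ (fun k _ => zeroExtend_of_le_right Q k) l).symm
  obtain ⟨u, hu⟩ := exists_pad1_eq (d := m - 1) (fun i => -zeroExtend Q i 0) (by simp [h₀])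
    (fun i hi => by simp [zeroExtend_of_le_left Q (show m ≤ i by omega)])
  let v : Fin (2 - 1) → ℝ := fun _ => 1
  have hv₁ : pad1 v 1 = 1 := dif_pos (by norm_num)
  refine ⟨u, v, fun k l => ?_⟩
  fin_cases l
  · simpa [hu, hv₁, pad1_zero] using (zeroExtend_coe Q k 0).symm
  · simpa [hu, hv₁, pad1_eq_zero_of_le v le_rfl, ← hdiag]
      using (zeroExtend_coe Q k 1).symm

lemma rankTwoNull_width_two_eq_N0set (m : ℕ) : rankTwoNull m 2 = N0set m 2 :=
  (rankTwoNull_subset_N0set_width_two m).antisymm (N0set_subset_rankTwoNull m 2)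

lemma rankTwoNull_height_two_eq_N0set (n : ℕ) : rankTwoNull 2 n = N0set 2 n := by
  ext Q
  rw [← transpose_mem_rankTwoNull_iff, ← transpose_mem_N0set_iff,
    rankTwoNull_width_two_eq_N0set]

theorem stmt3_general (m n : ℕ) :
    rankTwoNull m 2 = N0set m 2 ∧ rankTwoNull 2 n = N0set 2 n :=
  ⟨rankTwoNull_width_two_eq_N0set m, rankTwoNull_height_two_eq_N0set n⟩

/-- for `m, n ≥ 2`, `N(S_{(m,2)}, 2) = N0(m,2)` and `N(S_{(2,n)}, 2) = N0(2,n)`. -/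
theorem stmt3 (m n : ℕ) (hm : 2 ≤ m) (hn : 2 ≤ n) :
    rankTwoNull m 2 = N0set m 2 ∧ rankTwoNull 2 n = N0set 2 n :=
  stmt3_general m n
end
end

section
/- Let m, n ≥ 2, let x ∈ ℝ^m be nonzero with x(1) = 0, and let y ∈ ℝ^n be nonzero with y(n) = 0. Define x' ∈ ℝ^m by x'(j) = x(j+1) for 1 ≤ j ≤ m−1 and x'(m) = 0, and y' ∈ ℝ^n by y'(1) = 0 and y'(j) = y(j−1) for 2 ≤ j ≤ n. Then x' ⋆ y' = x ⋆ y while x' is not a scalar multiple of x; consequently, (x,y) is unidentifiable with respect to linear convolution and K = ℝ^m × ℝ^n. -/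
open scoped BigOperators
open MeasureTheory

noncomputable section

/- Under `x(1) = 0` and `y(n) = 0`, both convolutions are the sum of
`x(k+1)·y(j)` over `1 ≤ k ≤ m-1`, `1 ≤ j ≤ n-1` with `k + j = l`: shifting `x` left and `y`
right only moves the index at which each factor is read. If `x'` were `α·x`, then
`x(j+1) = α·x(j)` together with `x(1) = 0` would force `x = 0`. -/

def shiftLeft {m : ℕ} (x : Fin m → ℝ) : Fin m → ℝ := fun j =>
  if h : (j : ℕ) + 1 < m then x ⟨(j : ℕ) + 1, h⟩ else 0

def shiftRight {n : ℕ} (y : Fin n → ℝ) : Fin n → ℝ := fun j =>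
  if h : 1 ≤ (j : ℕ) then y ⟨(j : ℕ) - 1, by have := j.isLt; omega⟩ else 0

section Shift

variable {m n : ℕ}

@[simp]
lemma shiftLeft_castSucc (x : Fin (m + 1) → ℝ) (k : Fin m) :
    shiftLeft x k.castSucc = x k.succ := by
  simp [shiftLeft, Fin.succ]

@[simp]
lemma shiftLeft_last (x : Fin (m + 1) → ℝ) : shiftLeft x (Fin.last m) = 0 := by
  simp [shiftLeft]

@[simp]
lemma shiftRight_succ (y : Fin (n + 1) → ℝ) (j : Fin n) :
    shiftRight y j.succ = y j.castSucc :=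
  dif_pos j.succ_pos

@[simp]
lemma shiftRight_zero (y : Fin (n + 1) → ℝ) : shiftRight y 0 = 0 := by
  simp [shiftRight]

lemma conv_eq_sum_succ_castSucc {x : Fin (m + 1) → ℝ} {y : Fin (n + 1) → ℝ}
    (hx : x 0 = 0) (hy : y (Fin.last n) = 0) (l : Fin (m + 1 + (n + 1) - 1)) :
    conv x y l = ∑ k : Fin m, ∑ j : Fin n,
      if (k : ℕ) + 1 + j = l then x k.succ * y j.castSucc else 0 := by
  simp [conv, Fin.sum_univ_succ (n := m), Fin.sum_univ_castSucc (n := n), hx, hy]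

theorem conv_shiftLeft_shiftRight {x : Fin (m + 1) → ℝ} {y : Fin (n + 1) → ℝ}
    (hx : x 0 = 0) (hy : y (Fin.last n) = 0) :
    conv (shiftLeft x) (shiftRight y) = conv x y := by
  funext l
  rw [conv_eq_sum_succ_castSucc hx hy]
  simp [conv, Fin.sum_univ_castSucc (n := m), Fin.sum_univ_succ (n := n), add_right_comm,
    add_assoc]

theorem shiftLeft_ne_smul {x : Fin (m + 1) → ℝ} (hx : x ≠ 0) (hx0 : x 0 = 0) (α : ℝ) :
    shiftLeft x ≠ α • x := by
  intro h
  refine hx (funext fun i => ?_)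
  induction i using Fin.induction with
  | zero => exact hx0
  | succ k hk =>
    calc x k.succ = shiftLeft x k.castSucc := (shiftLeft_castSucc x k).symm
      _ = α * x k.castSucc := congrFun h _
      _ = 0 := by rw [hk, Pi.zero_apply, mul_zero]

end Shift

theorem not_identifiable_of_conv_eq {m n : ℕ} {K : Set ((Fin m → ℝ) × (Fin n → ℝ))}
    {p q : (Fin m → ℝ) × (Fin n → ℝ)} (hq : q ∈ K) (hconv : conv q.1 q.2 = conv p.1 p.2)
    (hscal : ∀ α : ℝ, q.1 ≠ α • p.1) : ¬ Identifiable K p := fun hp =>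
  let ⟨α, _, hα, _⟩ := hp q hq hconv
  hscal α hα

/-- if `x ≠ 0` with `x(1) = 0` and `y ≠ 0` with `y(n) = 0`, shifting `x`
left and `y` right keeps the convolution, while `x'` is not a scalar multiple of `x`;
hence `(x,y)` is unidentifiable within `K = ℝ^m × ℝ^n`. -/
theorem stmt18 (m n : ℕ) (hm : 2 ≤ m) (hn : 2 ≤ n)
    (x : Fin m → ℝ) (hx : x ≠ 0) (hx1 : x ⟨0, by omega⟩ = 0)
    (y : Fin n → ℝ) (hyn : y ⟨n - 1, by omega⟩ = 0) :
    let x' : Fin m → ℝ := fun j =>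
      if h : (j : ℕ) + 1 < m then x ⟨(j : ℕ) + 1, h⟩ else 0
    let y' : Fin n → ℝ := fun j =>
      if h : 1 ≤ (j : ℕ) then y ⟨(j : ℕ) - 1, by have := j.isLt; omega⟩ else 0
    conv x' y' = conv x y ∧
    (∀ α : ℝ, x' ≠ α • x) ∧
    ¬ Identifiable (Set.univ : Set ((Fin m → ℝ) × (Fin n → ℝ))) (x, y) := by
  show conv (shiftLeft x) (shiftRight y) = conv x y ∧ (∀ α : ℝ, shiftLeft x ≠ α • x) ∧ _
  obtain ⟨m, rfl⟩ := Nat.exists_eq_add_one_of_ne_zero (by omega : m ≠ 0)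
  obtain ⟨n, rfl⟩ := Nat.exists_eq_add_one_of_ne_zero (by omega : n ≠ 0)
  have hconv := conv_shiftLeft_shiftRight hx1 hyn
  have hscal := shiftLeft_ne_smul hx hx1
  exact ⟨hconv, hscal, not_identifiable_of_conv_eq (Set.mem_univ (_, _)) hconv hscal⟩
end
end
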